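/- There exists a finite-horizon MDP with stochastic (non-deterministic) transitions, real-valued reward, and a full-support prior policy p, such that the deterministic-case equivalence between re-conditioning and temperature scaling fails: the twice-iterated control-as-inference policy differs from the temperature-2 policy, i.e., π^G_2 ≠ π_α for α = 2. -/

import Mathlib

open scoped BigOperators ENNReal

/-- A finite-horizon MDP: finite nonempty state and action types, transition kernel,
initial distribution, horizon `T` (time steps `0,…,T`), and non-positive real reward. -/
structure MDP where
  S : Type
  A : Type
  [fintS : Fintype S]
  [fintA : Fintype A]
  [deceqS : DecidableEq S]
  [deceqA : DecidableEq A]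
  [noneS : Nonempty S]
  [noneA : Nonempty A]
  tk : S → A → PMF S
  init : PMF S
  T : ℕ
  r : S → A → ℝ
  r_nonpos : ∀ s a, r s a ≤ 0

attribute [instance] MDP.fintS MDP.fintA MDP.deceqS MDP.deceqA MDP.noneS MDP.noneA

/-- A policy: a family of action distributions, one for each time step and state. -/
abbrev MDP.Policy (M : MDP) : Type := ℕ → M.S → PMF M.A

/-- Deterministic transitions: every `τ(s,a)` is a point mass. -/
def MDP.Det (M : MDP) : Prop := ∀ s a, ∃ s', M.tk s a = PMF.pure s'

/-- Soft `Q` for a (possibly time-indexed) reward `r'`, indexed by the number of remaining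
steps `k` (so that the actual time is `M.T - k`):
`Q_T(s,a) = r'_T(s,a)` and, for `t < T`,
`Q_t(s,a) = r'_t(s,a) + log E_{s'∼τ(s,a)}[exp V_{t+1}(s')]` with
`V_t(s) = log E_{a∼π_t(s)}[exp Q_t(s,a)]`. -/
noncomputable def QrevR (M : MDP) (r' : ℕ → M.S → M.A → ℝ) (π : M.Policy) :
    ℕ → M.S → M.A → ℝ
  | 0 => fun s a => r' M.T s a
  | (k+1) => fun s a => r' (M.T - (k+1)) s a +
      Real.log (∑ s' : M.S, (M.tk s a s').toReal *
        Real.exp (Real.log (∑ a' : M.A, ((π (M.T - k) s') a').toReal *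
          Real.exp (QrevR M r' π k s' a'))))

/-- Soft `Q^{π,r'}_t` at actual time `t`. -/
noncomputable def softQR (M : MDP) (r' : ℕ → M.S → M.A → ℝ) (π : M.Policy)
    (t : ℕ) : M.S → M.A → ℝ :=
  QrevR M r' π (M.T - t)

/-- Soft `Q^π_t` for the MDP's own reward. -/
noncomputable def softQ (M : MDP) (π : M.Policy) (t : ℕ) : M.S → M.A → ℝ :=
  softQR M (fun _ => M.r) π t

/-- Soft `V^π_t(s) = log E_{a∼π_t(s)}[exp Q^π_t(s,a)]`. -/
noncomputable def softV (M : MDP) (π : M.Policy) (t : ℕ) (s : M.S) : ℝ :=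
  Real.log (∑ a : M.A, ((π t s) a).toReal * Real.exp (softQ M π t s a))

/-- A trajectory `ξ = (s_0,…,s_T, a_0,…,a_T)`. -/
abbrev MDP.Traj (M : MDP) : Type := (Fin (M.T + 1) → M.S) × (Fin (M.T + 1) → M.A)

/-- The probability of a trajectory under policy `π`:
`s_0 ∼ μ`, `a_t ∼ π_t(s_t)`, `s_{t+1} ∼ τ(s_t,a_t)`. -/
noncomputable def trajP (M : MDP) (π : M.Policy) (ξ : M.Traj) : ℝ≥0∞ :=
  M.init (ξ.1 0) * (∏ t : Fin (M.T + 1), (π t.val (ξ.1 t)) (ξ.2 t)) *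
    ∏ t : Fin M.T, (M.tk (ξ.1 t.castSucc) (ξ.2 t.castSucc)) (ξ.1 t.succ)

open Classical in
/-- Kullback–Leibler divergence between two probability mass functions on a finite type,
valued in `[0,∞]`. -/
noncomputable def KLfin {α : Type} [Fintype α] (q p : α → ℝ≥0∞) : ℝ≥0∞ :=
  if ∀ a, p a = 0 → q a = 0 then
    ENNReal.ofReal (∑ a : α, (q a).toReal * Real.log ((q a).toReal / (p a).toReal))
  else ⊤

/-- Occupancy measure: the probability that the state at time `t` is `s` under `p_π`. -/
noncomputable def occ (M : MDP) (π : M.Policy) (t : Fin (M.T + 1)) (s : M.S) : ℝ≥0∞ :=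
  ∑ ξ : M.Traj, if ξ.1 t = s then trajP M π ξ else 0

/-- The return `J(π) = E_{ξ∼p_π}[Σ_t r(s_t,a_t)]`. -/
noncomputable def Jret (M : MDP) (π : M.Policy) : ℝ :=
  ∑ ξ : M.Traj, (trajP M π ξ).toReal * ∑ t : Fin (M.T + 1), M.r (ξ.1 t) (ξ.2 t)

/-- Success probability `P(π) = E_{ξ∼p_π}[∏_t exp r(s_t,a_t)]`. -/
noncomputable def successP (M : MDP) (π : M.Policy) : ℝ :=
  ∑ ξ : M.Traj, (trajP M π ξ).toReal * ∏ t : Fin (M.T + 1), Real.exp (M.r (ξ.1 t) (ξ.2 t))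

/-- Normalisation of a nonzero, finite weight function on a finite type into a `PMF`. -/
noncomputable def normPMF {α : Type} [Fintype α] (f : α → ℝ≥0∞)
    (h0 : ∃ a, f a ≠ 0) (hfin : ∀ a, f a ≠ ∞) : PMF α :=
  PMF.normalize f
    (fun h => by obtain ⟨a, ha⟩ := h0; exact ha (ENNReal.tsum_eq_zero.mp h a))
    (by
      rw [tsum_fintype]
      exact (ENNReal.sum_lt_top.mpr fun a _ => (hfin a).lt_top).ne)

/-- The control-as-inference operator:
`G(π)_t(a|s) ∝ π_t(a|s)·exp(Q^π_t(s,a))`. -/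
noncomputable def Gop (M : MDP) (π : M.Policy) : M.Policy := fun t s =>
  normPMF (fun a => (π t s) a * ENNReal.ofReal (Real.exp (softQ M π t s a)))
    (by
      obtain ⟨a, ha⟩ := (π t s).support_nonempty
      exact ⟨a, mul_ne_zero (((π t s).mem_support_iff a).mp ha)
        (ENNReal.ofReal_pos.mpr (Real.exp_pos _)).ne'⟩)
    (fun a => ENNReal.mul_ne_top (PMF.apply_ne_top _ _) ENNReal.ofReal_ne_top)

/-- The control-as-inference sequence: `π^G_0 = p`, `π^G_{i+1} = G(π^G_i)`. -/
noncomputable def Gseq (M : MDP) (p : M.Policy) : ℕ → M.Policy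
  | 0 => p
  | (k+1) => Gop M (Gseq M p k)

/-- The Boltzmann policy `π^δ_t(a|s) ∝ exp(Q^π_t(s,a)/δ)`. -/
noncomputable def Boltz (M : MDP) (π : M.Policy) (δ : ℝ) : M.Policy := fun t s =>
  normPMF (fun a => ENNReal.ofReal (Real.exp (softQ M π t s a / δ)))
    ⟨Classical.arbitrary M.A, (ENNReal.ofReal_pos.mpr (Real.exp_pos _)).ne'⟩
    (fun _ => ENNReal.ofReal_ne_top)

/-- Boltzmann incoherence `κ_δ(π) = KL(p_π ‖ p_{π^δ})`. -/
noncomputable def kappaDelta (M : MDP) (π : M.Policy) (δ : ℝ) : ℝ≥0∞ :=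
  KLfin (trajP M π) (trajP M (Boltz M π δ))

/-- Temperature-`α` policy of the prior `p`: `π_{α,t}(a|s) ∝ p_t(a|s)·exp(Q^{p,αr}_t(s,a))`. -/
noncomputable def tempPolicy (M : MDP) (p : M.Policy) (α : ℝ) : M.Policy := fun t s =>
  normPMF (fun a => (p t s) a *
      ENNReal.ofReal (Real.exp (softQR M (fun _ s' a' => α * M.r s' a') p t s a)))
    (by
      obtain ⟨a, ha⟩ := (p t s).support_nonempty
      exact ⟨a, mul_ne_zero (((p t s).mem_support_iff a).mp ha)
        (ENNReal.ofReal_pos.mpr (Real.exp_pos _)).ne'⟩)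
    (fun a => ENNReal.mul_ne_top (PMF.apply_ne_top _ _) ENNReal.ofReal_ne_top)

/-- One folding step: the policy `∝ p_t(a|s)·exp(Q^{p,r_k}_t(s,a))` for a
time-indexed reward `rk`. -/
noncomputable def foldStep (M : MDP) (p : M.Policy) (rk : ℕ → M.S → M.A → ℝ) :
    M.Policy := fun t s =>
  normPMF (fun a => (p t s) a * ENNReal.ofReal (Real.exp (softQR M rk p t s a)))
    (by
      obtain ⟨a, ha⟩ := (p t s).support_nonempty
      exact ⟨a, mul_ne_zero (((p t s).mem_support_iff a).mp ha)
        (ENNReal.ofReal_pos.mpr (Real.exp_pos _)).ne'⟩)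
    (fun a => ENNReal.mul_ne_top (PMF.apply_ne_top _ _) ENNReal.ofReal_ne_top)

/-- Folded sequence (rewards and policies): `r_0 = r`, `π^F_0 = p`,
`π^F_{k+1,t}(a|s) ∝ p_t(a|s)·exp(Q^{p,r_k}_t(s,a))`,
`r_{k+1,t}(s,a) = r_0(s,a) + log π^F_{k+1,t}(a|s)`. -/
noncomputable def foldAux (M : MDP) (p : M.Policy) : ℕ → (ℕ → M.S → M.A → ℝ) × M.Policy
  | 0 => (fun _ => M.r, p)
  | (k+1) =>
      (fun t s a => M.r s a + Real.log (((foldStep M p (foldAux M p k).1 t s) a).toReal),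
        foldStep M p (foldAux M p k).1)

/-- The folded-sequence policy `π^F_k`. -/
noncomputable def foldPi (M : MDP) (p : M.Policy) (k : ℕ) : M.Policy := (foldAux M p k).2

/-- Cumulative folded sequence: as the folded sequence but with
`r_{k+1,t}(s,a) = r_{k,t}(s,a) + log π^H_{k+1,t}(a|s)`. -/
noncomputable def foldAuxH (M : MDP) (p : M.Policy) : ℕ → (ℕ → M.S → M.A → ℝ) × M.Policy
  | 0 => (fun _ => M.r, p)
  | (k+1) =>
      (fun t s a => (foldAuxH M p k).1 t s a +
          Real.log (((foldStep M p (foldAuxH M p k).1 t s) a).toReal),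
        foldStep M p (foldAuxH M p k).1)

/-- The cumulative folded-sequence policy `π^H_k`. -/
noncomputable def foldPiH (M : MDP) (p : M.Policy) (k : ℕ) : M.Policy := (foldAuxH M p k).2

/-!
In `coinMDP` (horizon `1`, reward `r(s) ∈ {0, -1}` depending on the state only, action `false`
leading to the bad state and action `true` to a fair coin flip) the terminal soft value is
`V_1 = r` whatever the policy, so `Q^π_0(s,a) = r(s) + log E_{s'∼τ(s,a)}[exp r(s')]` does not
depend on `π`. Each application of `G` therefore multiplies the likelihood ratio
`π_0(true|s) / π_0(false|s)` by the same factor `((1+u)/2)/u`, where `u = e⁻¹`, whereas the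
temperature-2 policy multiplies it by `((1+u²)/2)/u²`. Since the coin is not degenerate, the
squared mean `((1+u)/2)²` is strictly smaller than the mean square `(1+u²)/2`.
-/

theorem PMF.sum_toReal_eq_one {α : Type} [Fintype α] (q : PMF α) :
    ∑ a, (q a).toReal = 1 := by
  rw [← ENNReal.toReal_sum fun a _ => q.apply_ne_top a, ← tsum_fintype (L := .unconditional _),
    q.tsum_coe, ENNReal.toReal_one]

theorem PMF.sum_toReal_mul_pos {α : Type} [Fintype α] (q : PMF α) {f : α → ℝ}
    (hf : ∀ a, 0 < f a) : 0 < ∑ a, (q a).toReal * f a := by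
  obtain ⟨a, ha⟩ := q.support_nonempty
  refine Finset.sum_pos' (fun b _ => mul_nonneg ENNReal.toReal_nonneg (hf b).le)
    ⟨a, Finset.mem_univ a, mul_pos ?_ (hf a)⟩
  exact ENNReal.toReal_pos ((q.mem_support_iff a).mp ha) (q.apply_ne_top a)

theorem normPMF_toReal_div {α : Type} [Fintype α] (f : α → ℝ≥0∞) (h0 : ∃ a, f a ≠ 0)
    (hfin : ∀ a, f a ≠ ∞) (a b : α) :
    (normPMF f h0 hfin a).toReal / (normPMF f h0 hfin b).toReal
      = (f a).toReal / (f b).toReal := by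
  have hsum0 : ∑ c, f c ≠ 0 := by
    obtain ⟨c, hc⟩ := h0
    exact fun h => hc (Finset.sum_eq_zero_iff.mp h c (Finset.mem_univ c))
  have hsum_top : ∑ c, f c ≠ ∞ := ENNReal.sum_ne_top.mpr fun c _ => hfin c
  have hinv : ((∑ c, f c)⁻¹).toReal ≠ 0 :=
    ENNReal.toReal_ne_zero.mpr ⟨ENNReal.inv_ne_zero.mpr hsum_top, ENNReal.inv_ne_top.mpr hsum0⟩
  simp only [normPMF, PMF.normalize_apply, tsum_fintype, ENNReal.toReal_mul]
  exact mul_div_mul_right _ _ hinv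

section SoftQ

variable (M : MDP)

theorem foldStep_toReal_div (p : M.Policy) (r' : ℕ → M.S → M.A → ℝ) (t : ℕ) (s : M.S)
    (a b : M.A) :
    (foldStep M p r' t s a).toReal / (foldStep M p r' t s b).toReal
      = (p t s a).toReal / (p t s b).toReal
        * (Real.exp (softQR M r' p t s a) / Real.exp (softQR M r' p t s b)) := by
  rw [foldStep, normPMF_toReal_div, ENNReal.toReal_mul, ENNReal.toReal_mul,
    ENNReal.toReal_ofReal (Real.exp_pos _).le, ENNReal.toReal_ofReal (Real.exp_pos _).le,
    mul_div_mul_comm]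

theorem Gop_toReal_div (π : M.Policy) (t : ℕ) (s : M.S) (a b : M.A) :
    (Gop M π t s a).toReal / (Gop M π t s b).toReal
      = (π t s a).toReal / (π t s b).toReal
        * (Real.exp (softQ M π t s a) / Real.exp (softQ M π t s b)) :=
  foldStep_toReal_div M π _ t s a b

theorem tempPolicy_toReal_div (p : M.Policy) (α : ℝ) (t : ℕ) (s : M.S) (a b : M.A) :
    (tempPolicy M p α t s a).toReal / (tempPolicy M p α t s b).toReal
      = (p t s a).toReal / (p t s b).toReal
        * (Real.exp (softQR M (fun _ s a => α * M.r s a) p t s a)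
          / Real.exp (softQR M (fun _ s a => α * M.r s a) p t s b)) :=
  foldStep_toReal_div M p _ t s a b

theorem QrevR_one_of_terminal_eq (r' : ℕ → M.S → M.A → ℝ) (π : M.Policy) (ρ : M.S → ℝ)
    (hρ : ∀ s a, r' M.T s a = ρ s) (s : M.S) (a : M.A) :
    QrevR M r' π 1 s a
      = r' (M.T - 1) s a + Real.log (∑ s', (M.tk s a s').toReal * Real.exp (ρ s')) := by
  simp only [QrevR, hρ, ← Finset.sum_mul, PMF.sum_toReal_eq_one, one_mul, Real.log_exp]

end SoftQ

noncomputable def uniformPolicy (M : MDP) : M.Policy := fun _ _ => PMF.uniformOfFintype M.A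

noncomputable abbrev coinMDP : MDP where
  S := Bool
  A := Bool
  tk := fun _ a => if a then PMF.uniformOfFintype Bool else PMF.pure false
  init := PMF.pure true
  T := 1
  r := fun s _ => if s then 0 else -1
  r_nonpos := fun s _ => by cases s <;> norm_num

theorem coinMDP_not_det : ¬ coinMDP.Det := by
  intro h
  obtain ⟨s, hs⟩ := h true true
  have hsupp := congrArg PMF.support hs
  simp only [coinMDP, if_true, PMF.support_uniformOfFintype, PMF.support_pure] at hsupp
  simpa [PMF.pure_apply] using (Set.ext_iff.mp hsupp (!s)).mp (Set.mem_univ _)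

theorem exp_softQR_coinMDP (π : coinMDP.Policy) (c : ℝ) (s : coinMDP.S) (a : coinMDP.A) :
    Real.exp (softQR coinMDP (fun _ s a => c * coinMDP.r s a) π 0 s a)
      = Real.exp (c * coinMDP.r s a)
        * cond a ((1 + Real.exp (-c)) / 2) (Real.exp (-c)) := by
  rw [softQR, show coinMDP.T - 0 = 1 from rfl,
    QrevR_one_of_terminal_eq coinMDP _ π (fun s => c * coinMDP.r s true) fun _ _ => rfl,
    Real.exp_add, Real.exp_log (PMF.sum_toReal_mul_pos _ fun _ => Real.exp_pos _)]
  cases a <;> simp [PMF.uniformOfFintype_apply, div_eq_inv_mul, mul_add]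

theorem exp_softQ_coinMDP (π : coinMDP.Policy) (s : coinMDP.S) (a : coinMDP.A) :
    Real.exp (softQ coinMDP π 0 s a)
      = Real.exp (coinMDP.r s a) * cond a ((1 + Real.exp (-1)) / 2) (Real.exp (-1)) := by
  simpa [softQ] using exp_softQR_coinMDP π 1 s a

theorem eq_one_of_sq_mean_div_eq_mean_sq_div {u : ℝ} (hu : 0 < u)
    (h : ((1 + u) / 2 / u) ^ 2 = (1 + u ^ 2) / 2 / u ^ 2) : u = 1 := by
  field_simp at h
  nlinarith [sq_nonneg (u - 1)]

/-- there is a finite-horizon MDP with stochastic (non-deterministic)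
transitions and a full-support prior `p` for which the deterministic-case equivalence
fails: the twice-iterated control-as-inference policy differs from the temperature-2
policy, `π^G_2 ≠ π_α` for `α = 2`. -/
theorem stmt17 :
    ∃ M : MDP, ¬ M.Det ∧ ∃ p : M.Policy,
      (∀ (t : ℕ) (s : M.S) (a : M.A), (p t s) a ≠ 0) ∧
      ∃ t ≤ M.T, ∃ s : M.S, Gseq M p 2 t s ≠ tempPolicy M p 2 t s := by
  refine ⟨coinMDP, coinMDP_not_det, uniformPolicy coinMDP, fun _ _ _ => by simp [uniformPolicy],
    0, Nat.zero_le _, true, fun h => ?_⟩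
  have hratio := congrArg (fun q : PMF coinMDP.A => (q true).toReal / (q false).toReal) h
  simp only [Gseq] at hratio
  rw [Gop_toReal_div, Gop_toReal_div, tempPolicy_toReal_div] at hratio
  simp only [exp_softQ_coinMDP, exp_softQR_coinMDP] at hratio
  have hexp : Real.exp (-2) = Real.exp (-1) ^ 2 := by rw [← Real.exp_nat_mul]; norm_num
  have hu : Real.exp (-1) ≠ 1 := by simp
  exact hu (eq_one_of_sq_mean_div_eq_mean_sq_div (Real.exp_pos _)
    (by simpa [uniformPolicy, hexp, ← sq] using hratio))
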